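/- arXiv:1811.04541 — 3 statements merged into one kernel-verified Lean document; each statement's English description precedes it below -/
import Mathlib

section
/- Almost surely, liminf_{N→∞} M_N / log N ≥ 1, where log denotes the logarithm with base 2. -/
open MeasureTheory ProbabilityTheory Filter

/-- The block of `k + 1` consecutive tosses `X m, …, X (m + k)` (0-based indices) is
alternating, i.e. it contains `k` switches: every adjacent pair differs. -/
def AltBlock {Ω : Type*} (X : ℕ → Ω → Bool) (ω : Ω) (m k : ℕ) : Prop :=
  ∀ i, m ≤ i → i < m + k → X i ω ≠ X (i + 1) ω

/-- `M_N^{(s+1)}` in the paper's (1-based) notation: the number of switches in the longest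
run of consecutive switches in the window `X s, …, X (s + N - 1)` (0-based start `s`),
i.e. the largest `k` such that some block of `k + 1` consecutive tosses within the window
is alternating. -/
noncomputable def longestSwitchIn {Ω : Type*} (X : ℕ → Ω → Bool) (s N : ℕ) (ω : Ω) : ℕ :=
  sSup {k | ∃ m, s ≤ m ∧ m + k + 1 ≤ s + N ∧ AltBlock X ω m k}

/-- `M_N`: the number of switches in the longest run of consecutive switches among the
first `N` tosses `X 0, …, X (N - 1)` (0-based indexing of the paper's `X_1, …, X_N`). -/
noncomputable def longestSwitch {Ω : Type*} (X : ℕ → Ω → Bool) (N : ℕ) (ω : Ω) : ℕ :=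
  longestSwitchIn X 0 N ω

open Asymptotics Topology
open scoped ENNReal

/-!
Cut the first `2 ^ j` tosses into `2 ^ j / (k + 1)` disjoint blocks of length `k + 1`, where
`k = j - 2 (⌊log₂ j⌋ + 1)`. Each block is alternating with probability `2⁻ᵏ`, independently of
the others, so none of them is alternating with probability `(1 - 2⁻ᵏ) ^ (2 ^ j / (k + 1)) ≤ 2⁻ʲ`.
By Borel–Cantelli, almost surely `M (2 ^ j) ≥ j - O(log j)` for all large `j`, and monotonicity
of `M` fills in the `N` between consecutive powers of two. A union bound and Borel–Cantelli also
give `M (2 ^ j) ≤ 2 j` eventually; this keeps `M N / log₂ N` frequently bounded, without which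
its real-valued `liminf` would be the junk value `0`.
-/

section Deterministic

variable {Ω : Type*} {X : ℕ → Ω → Bool} {ω : Ω}

lemma AltBlock.mono {m k k' : ℕ} (h : AltBlock X ω m k) (hk : k' ≤ k) : AltBlock X ω m k' :=
  fun i h1 h2 => h i h1 (by omega)

lemma altBlock_iff_forall_fin {a k : ℕ} :
    AltBlock X ω a k ↔ ∀ i : Fin k, X (a + i) ω ≠ X (a + (i + 1)) ω := by
  refine ⟨fun h i => h (a + i) (by omega) (by omega), fun h i h1 h2 => ?_⟩
  obtain ⟨t, rfl⟩ := Nat.exists_eq_add_of_le h1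
  exact h ⟨t, by omega⟩

lemma altBlock_iff_exists_iterate {a k : ℕ} :
    AltBlock X ω a k ↔ ∃ b, ∀ t ≤ k, X (a + t) ω = not^[t] b := by
  constructor
  · intro h
    refine ⟨X a ω, fun t ht => ?_⟩
    induction t with
    | zero => rfl
    | succ t ih =>
      rw [Function.iterate_succ_apply', ← ih (by omega)]
      exact Bool.eq_not_of_ne (h (a + t) (by omega) (by omega)).symm
  · rintro ⟨b, hb⟩ i h1 h2
    obtain ⟨t, rfl⟩ := Nat.exists_eq_add_of_le h1
    rw [hb t (by omega), add_assoc, hb (t + 1) (by omega), Function.iterate_succ_apply']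
    exact (Bool.not_ne_self _).symm

lemma bddAbove_setOf_altBlock (s N : ℕ) :
    BddAbove {k | ∃ m, s ≤ m ∧ m + k + 1 ≤ s + N ∧ AltBlock X ω m k} :=
  ⟨s + N, fun _ ⟨_, _, h, _⟩ => by omega⟩

lemma le_longestSwitch {m k N : ℕ} (hN : m + k + 1 ≤ N) (h : AltBlock X ω m k) :
    k ≤ longestSwitch X N ω :=
  le_csSup (bddAbove_setOf_altBlock 0 N) ⟨m, m.zero_le, by omega, h⟩

lemma longestSwitch_le {N K : ℕ} (h : ∀ m < N, ¬AltBlock X ω m (K + 1)) :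
    longestSwitch X N ω ≤ K := by
  refine csSup_le' fun k ⟨m, _, hmk, halt⟩ => ?_
  by_contra! hk
  exact h m (by omega) (halt.mono hk)

lemma longestSwitch_mono : Monotone fun N => longestSwitch X N ω :=
  fun _ _ hNN' => csSup_le_csSup' (bddAbove_setOf_altBlock 0 _)
    fun _ ⟨m, hm, hmk, halt⟩ => ⟨m, hm, by omega, halt⟩

lemma setOf_altBlock_eq_iUnion (a k : ℕ) :
    {ω | AltBlock X ω a k} = ⋃ b, ⋂ t ∈ Finset.range (k + 1), X (a + t) ⁻¹' {not^[t] b} := by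
  ext ω
  simp [altBlock_iff_exists_iterate]

end Deterministic

lemma tendsto_natLog_atTop {b : ℕ} (hb : 1 < b) : Tendsto (Nat.log b) atTop atTop :=
  tendsto_atTop_atTop.2 fun J => ⟨b ^ J, fun _ hN => Nat.le_log_of_pow_le hb hN⟩

lemma isLittleO_natLog (b : ℕ) :
    (fun n : ℕ => (Nat.log b n : ℝ)) =o[atTop] (fun n : ℕ => (n : ℝ)) := by
  have hlogb : (fun n : ℕ => Real.logb b n) =o[atTop] (fun n : ℕ => (n : ℝ)) := by
    simp only [Real.logb, div_eq_inv_mul]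
    exact (Real.isLittleO_log_id_atTop.comp_tendsto tendsto_natCast_atTop_atTop).const_mul_left _
  refine IsBigO.trans_isLittleO (IsBigO.of_bound 1 (Eventually.of_forall fun n => ?_)) hlogb
  have h := Real.natLog_le_logb n b
  rw [Real.norm_natCast, one_mul, Real.norm_of_nonneg ((Nat.cast_nonneg _).trans h)]
  exact h

lemma logb_natCast_lt_natLog_add_one (b N : ℕ) : Real.logb b N < Nat.log b N + 1 := by
  simpa [← Real.natFloor_logb_natCast] using Nat.lt_floor_add_one (Real.logb b N)

lemma tendsto_sub_div_add_one {g : ℕ → ℝ} (hg : g =o[atTop] (fun j : ℕ => (j : ℝ))) :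
    Tendsto (fun j : ℕ => (j - g j) / (j + 1)) atTop (𝓝 1) := by
  have h : Tendsto (fun j : ℕ => (1 - g j / j) * ((j : ℝ) / (j + 1))) atTop (𝓝 ((1 - 0) * 1)) :=
    (tendsto_const_nhds.sub hg.tendsto_div_nhds_zero).mul (tendsto_natCast_div_add_atTop 1)
  rw [sub_zero, mul_one] at h
  refine h.congr' ((eventually_ne_atTop 0).mono fun j hj => ?_)
  have : (j : ℝ) ≠ 0 := Nat.cast_ne_zero.2 hj
  field_simp

lemma isCoboundedUnder_ge_div_logb_two {M : ℕ → ℝ} {C : ℝ}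
    (h : ∃ᶠ j : ℕ in atTop, M (2 ^ j) ≤ C * j) :
    IsCoboundedUnder (· ≥ ·) atTop (fun N : ℕ => M N / Real.logb 2 N) := by
  refine IsCoboundedUnder.of_frequently_le (a := C) ?_
  refine (tendsto_pow_atTop_atTop_of_one_lt one_lt_two).frequently ?_
  refine (h.and_eventually (eventually_gt_atTop 0)).mono fun j ⟨hj, hj0⟩ => ?_
  have hlogb : Real.logb 2 ((2 ^ j : ℕ) : ℝ) = j := by simp [Real.logb_pow]
  rw [hlogb, div_le_iff₀ (by exact_mod_cast hj0)]
  exact hj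

lemma one_le_liminf_div_logb_two {M : ℕ → ℕ} (hM : Monotone M) {g : ℕ → ℕ}
    (hg : (fun j => (g j : ℝ)) =o[atTop] (fun j : ℕ => (j : ℝ)))
    (hlow : ∀ᶠ j in atTop, j - g j ≤ M (2 ^ j)) {C : ℝ}
    (hup : ∃ᶠ j : ℕ in atTop, (M (2 ^ j) : ℝ) ≤ C * j) :
    1 ≤ liminf (fun N : ℕ => (M N : ℝ) / Real.logb 2 N) atTop := by
  set a : ℕ → ℝ := fun j => (j - g j) / (j + 1)
  have ha : Tendsto (a ∘ Nat.log 2) atTop (𝓝 1) :=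
    (tendsto_sub_div_add_one hg).comp (tendsto_natLog_atTop one_lt_two)
  -- with `j = Nat.log 2 N`, i.e. `2 ^ j ≤ N < 2 ^ (j + 1)`: `M (2 ^ j) ≤ M N`, `logb 2 N < j + 1`
  have hbound : ∀ᶠ N in atTop, a (Nat.log 2 N) ≤ M N / Real.logb 2 N := by
    filter_upwards [(tendsto_natLog_atTop one_lt_two).eventually hlow, eventually_ge_atTop 2]
      with N hj hN
    set j := Nat.log 2 N
    have hlogpos : 0 < Real.logb 2 N := Real.logb_pos one_lt_two (by exact_mod_cast hN)
    rcases le_or_gt (a j) 0 with ha0 | ha0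
    · exact ha0.trans (by positivity)
    have hMN : (j : ℝ) - g j ≤ M N :=
      calc (j : ℝ) - g j ≤ ((j - g j : ℕ) : ℝ) := by
            rw [sub_le_iff_le_add]
            exact_mod_cast le_tsub_add
        _ ≤ M N := by exact_mod_cast hj.trans (hM (Nat.pow_log_le_self 2 (by omega)))
    rw [le_div_iff₀ hlogpos]
    calc a j * Real.logb 2 N ≤ a j * (j + 1) :=
          mul_le_mul_of_nonneg_left (logb_natCast_lt_natLog_add_one 2 N).le ha0.le
      _ = j - g j := by simp only [a]; field_simp
      _ ≤ M N := hMN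
  calc (1 : ℝ) = liminf (a ∘ Nat.log 2) atTop := ha.liminf_eq.symm
    _ ≤ _ := liminf_le_liminf hbound ha.isBoundedUnder_ge (isCoboundedUnder_ge_div_logb_two hup)

lemma ProbabilityTheory.iIndepFun.curry {Ω ι κ β : Type*} [MeasurableSpace Ω] {P : Measure Ω}
    [MeasurableSpace β] {X : ι × κ → Ω → β} (hmeas : ∀ p, Measurable (X p)) (h : iIndepFun X P) :
    iIndepFun (fun i ω j => X (i, j) ω) P := by
  have := h.isProbabilityMeasure
  have : ∀ p, IsProbabilityMeasure (P.map (X p)) :=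
    fun p => Measure.isProbabilityMeasure_map (hmeas p).aemeasurable
  rw [iIndepFun_iff_map_fun_eq_infinitePi_map (fun i => by fun_prop)]
  have hrow (i : ι) :
      P.map (fun ω j => X (i, j) ω) = Measure.infinitePi fun j => P.map (X (i, j)) :=
    (iIndepFun_iff_map_fun_eq_infinitePi_map (fun j => hmeas _)).1
      (h.precomp (Prod.mk_right_injective i))
  simp_rw [hrow]
  rw [← Measure.infinitePi_map_curry (fun i j => P.map (X (i, j))),
    ← (iIndepFun_iff_map_fun_eq_infinitePi_map hmeas).1 h,
    Measure.map_map (by fun_prop) (by fun_prop)]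
  rfl

lemma one_sub_inv_two_pow_pow_le {j k n : ℕ} (hn : j * 2 ^ k ≤ n) :
    (1 - 2⁻¹ ^ k : ℝ≥0∞) ^ n ≤ 2⁻¹ ^ j := by
  have hpos : (0 : ℝ) < 2⁻¹ ^ k := by positivity
  have h0 : (0 : ℝ) ≤ 1 - 2⁻¹ ^ k := sub_nonneg.2 (pow_le_one₀ (by norm_num) (by norm_num))
  have hreal : (1 - 2⁻¹ ^ k : ℝ) ^ n ≤ 2⁻¹ ^ j := by
    have hexp : (1 - 2⁻¹ ^ k : ℝ) ^ 2 ^ k ≤ 2⁻¹ := by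
      calc (1 - 2⁻¹ ^ k : ℝ) ^ 2 ^ k = (1 - 1 / ((2 ^ k : ℕ) : ℝ)) ^ 2 ^ k := by simp
        _ ≤ Real.exp (-1) :=
          Real.one_sub_div_pow_le_exp_neg (by exact_mod_cast Nat.one_le_two_pow)
        _ ≤ 2⁻¹ := by
          rw [Real.exp_neg]
          exact inv_anti₀ two_pos (by linarith [Real.add_one_le_exp 1])
    calc (1 - 2⁻¹ ^ k : ℝ) ^ n ≤ (1 - 2⁻¹ ^ k) ^ (2 ^ k * j) :=
          pow_le_pow_of_le_one h0 (by linarith) (by linarith)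
      _ = ((1 - 2⁻¹ ^ k) ^ 2 ^ k) ^ j := pow_mul _ _ _
      _ ≤ 2⁻¹ ^ j := pow_le_pow_left₀ (pow_nonneg h0 _) hexp j
  have := ENNReal.ofReal_le_ofReal hreal
  rwa [ENNReal.ofReal_pow h0, ENNReal.ofReal_pow (by norm_num), ENNReal.ofReal_sub _ hpos.le,
    ENNReal.ofReal_pow (by norm_num), ENNReal.ofReal_inv_of_pos two_pos, ENNReal.ofReal_one,
    ENNReal.ofReal_ofNat] at this

lemma ae_eventually_notMem_of_le_inv_two_pow {Ω : Type*} [MeasurableSpace Ω] {μ : Measure Ω}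
    {s : ℕ → Set Ω} (h : ∀ j, μ (s j) ≤ 2⁻¹ ^ j) : ∀ᵐ ω ∂μ, ∀ᶠ j in atTop, ω ∉ s j := by
  refine ae_eventually_notMem (ne_top_of_le_ne_top ?_ (ENNReal.tsum_le_tsum h))
  simp [ENNReal.tsum_geometric, ENNReal.one_sub_inv_two]

lemma mul_two_pow_mul_le_two_pow (j : ℕ) :
    j * 2 ^ (j - 2 * (Nat.log 2 j + 1)) * (j - 2 * (Nat.log 2 j + 1) + 1) ≤ 2 ^ j := by
  set l := Nat.log 2 j + 1
  have hj : j < 2 ^ l := Nat.lt_pow_succ_log_self one_lt_two j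
  rcases le_or_gt (2 * l) j with hl | hl
  · calc j * 2 ^ (j - 2 * l) * (j - 2 * l + 1) ≤ 2 ^ l * 2 ^ (j - 2 * l) * 2 ^ l := by
          gcongr; omega
      _ = 2 ^ j := by rw [← pow_add, ← pow_add]; congr 1; omega
  · simpa [show j - 2 * l = 0 by omega] using Nat.lt_two_pow_self.le

section Coins

variable {Ω : Type*} [MeasurableSpace Ω] {P : Measure Ω} {X : ℕ → Ω → Bool}

lemma measure_altBlock (hmeas : ∀ i, Measurable (X i)) (hindep : iIndepFun X P)
    (hfair : ∀ i b, P {ω | X i ω = b} = 1 / 2) (a k : ℕ) :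
    P {ω | AltBlock X ω a k} = 2⁻¹ ^ k := by
  have hpattern (b : Bool) :
      P (⋂ t ∈ Finset.range (k + 1), X (a + t) ⁻¹' {not^[t] b}) = 2⁻¹ ^ (k + 1) := by
    rw [(hindep.precomp (add_right_injective a)).measure_inter_preimage_eq_mul _
      fun _ _ => measurableSet_singleton _]
    simp [Set.preimage, hfair]
  rw [setOf_altBlock_eq_iUnion, measure_iUnion, tsum_fintype, Fintype.sum_bool, hpattern,
    hpattern, pow_succ, ← mul_add, ENNReal.inv_two_add_inv_two, mul_one]
  · intro b b' hbb'
    refine Set.disjoint_left.2 fun ω hb hb' => hbb' ?_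
    simp only [Set.mem_iInter] at hb hb'
    simpa using (hb 0 (by simp)).symm.trans (hb' 0 (by simp))
  · exact fun b => .biInter (Set.to_countable _) fun t _ => hmeas _ (measurableSet_singleton _)

lemma measure_forall_not_altBlock [IsProbabilityMeasure P] (hmeas : ∀ i, Measurable (X i))
    (hindep : iIndepFun X P) (hfair : ∀ i b, P {ω | X i ω = b} = 1 / 2) (n k : ℕ) :
    P {ω | ∀ m < n, ¬AltBlock X ω (m * (k + 1)) k} = (1 - 2⁻¹ ^ k) ^ n := by
  set block : ℕ → Ω → Fin (k + 1) → Bool := fun m ω i => X (m * (k + 1) + i) ω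
  -- regroup the tosses along `ℕ ≃ ℕ × Fin (k + 1)`, `(m, i) ↦ m * (k + 1) + i`
  have hblock : iIndepFun block P :=
    (hindep.precomp (Nat.divModEquiv (k + 1)).symm.injective).curry fun _ => hmeas _
  set alt : Set (Fin (k + 1) → Bool) := {g | ∀ i : Fin k, g i.castSucc ≠ g i.succ}
  have hpre (m : ℕ) : block m ⁻¹' alt = {ω | AltBlock X ω (m * (k + 1)) k} := by
    ext ω
    simp [block, alt, altBlock_iff_forall_fin]
  have hset : {ω | ∀ m < n, ¬AltBlock X ω (m * (k + 1)) k} =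
      ⋂ m ∈ Finset.range n, block m ⁻¹' altᶜ := by
    simp_rw [Set.preimage_compl, hpre]
    ext ω
    simp
  rw [hset, hblock.measure_inter_preimage_eq_mul _ fun _ _ => (Set.toFinite _).measurableSet]
  simp_rw [Set.preimage_compl, hpre]
  have hmeas_alt (m : ℕ) : MeasurableSet {ω | AltBlock X ω (m * (k + 1)) k} :=
    hpre m ▸ measurable_pi_lambda _ (fun _ => hmeas _) (Set.toFinite alt).measurableSet
  simp [prob_compl_eq_one_sub (hmeas_alt _), measure_altBlock hmeas hindep hfair]

lemma measure_exists_altBlock_le (hmeas : ∀ i, Measurable (X i)) (hindep : iIndepFun X P)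
    (hfair : ∀ i b, P {ω | X i ω = b} = 1 / 2) (n k : ℕ) :
    P {ω | ∃ m < n, AltBlock X ω m k} ≤ n * 2⁻¹ ^ k := by
  have hset :
      {ω | ∃ m < n, AltBlock X ω m k} = ⋃ m ∈ Finset.range n, {ω | AltBlock X ω m k} := by
    ext ω
    simp
  calc P {ω | ∃ m < n, AltBlock X ω m k}
      ≤ ∑ m ∈ Finset.range n, P {ω | AltBlock X ω m k} := hset ▸ measure_biUnion_finset_le _ _
    _ = n * 2⁻¹ ^ k := by simp [measure_altBlock hmeas hindep hfair]

lemma ae_eventually_sub_le_longestSwitch_two_pow [IsProbabilityMeasure P]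
    (hmeas : ∀ i, Measurable (X i)) (hindep : iIndepFun X P)
    (hfair : ∀ i b, P {ω | X i ω = b} = 1 / 2) :
    ∀ᵐ ω ∂P, ∀ᶠ j in atTop, j - 2 * (Nat.log 2 j + 1) ≤ longestSwitch X (2 ^ j) ω := by
  set k : ℕ → ℕ := fun j => j - 2 * (Nat.log 2 j + 1)
  have hP (j : ℕ) :
      P {ω | ∀ m < 2 ^ j / (k j + 1), ¬AltBlock X ω (m * (k j + 1)) (k j)} ≤ 2⁻¹ ^ j := by
    rw [measure_forall_not_altBlock hmeas hindep hfair]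
    exact one_sub_inv_two_pow_pow_le
      ((Nat.le_div_iff_mul_le (Nat.succ_pos _)).2 (mul_two_pow_mul_le_two_pow j))
  filter_upwards [ae_eventually_notMem_of_le_inv_two_pow hP] with ω hω
  filter_upwards [hω] with j hj
  obtain ⟨m, hm, halt⟩ : ∃ m < 2 ^ j / (k j + 1), AltBlock X ω (m * (k j + 1)) (k j) := by
    simpa using hj
  refine le_longestSwitch ?_ halt
  calc m * (k j + 1) + k j + 1 = (m + 1) * (k j + 1) := by ring
    _ ≤ 2 ^ j / (k j + 1) * (k j + 1) := Nat.mul_le_mul_right _ hm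
    _ ≤ 2 ^ j := Nat.div_mul_le_self _ _

lemma ae_eventually_longestSwitch_two_pow_le (hmeas : ∀ i, Measurable (X i))
    (hindep : iIndepFun X P) (hfair : ∀ i b, P {ω | X i ω = b} = 1 / 2) :
    ∀ᵐ ω ∂P, ∀ᶠ j in atTop, longestSwitch X (2 ^ j) ω ≤ 2 * j := by
  have hP (j : ℕ) : P {ω | ∃ m < 2 ^ j, AltBlock X ω m (2 * j + 1)} ≤ 2⁻¹ ^ j :=
    calc P {ω | ∃ m < 2 ^ j, AltBlock X ω m (2 * j + 1)}
        ≤ (2 ^ j : ℕ) * 2⁻¹ ^ (2 * j + 1) := measure_exists_altBlock_le hmeas hindep hfair _ _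
      _ ≤ 2 ^ j * 2⁻¹ ^ (2 * j) := by
          push_cast
          gcongr 2 ^ j * ?_
          exact pow_le_pow_right_of_le_one' (by norm_num) (by omega)
      _ = 2⁻¹ ^ j := by
          rw [two_mul, pow_add, ← mul_assoc, ← mul_pow,
            ENNReal.mul_inv_cancel two_ne_zero ENNReal.ofNat_ne_top, one_pow, one_mul]
  filter_upwards [ae_eventually_notMem_of_le_inv_two_pow hP] with ω hω
  filter_upwards [hω] with j hj
  exact longestSwitch_le fun m hm halt => hj ⟨m, hm, halt⟩

end Coins

/-- Almost surely, `liminf N→∞ M_N / log₂ N ≥ 1`. -/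
theorem one_le_liminf_longestSwitch_div_log {Ω : Type*} [MeasurableSpace Ω] (P : Measure Ω) [IsProbabilityMeasure P]
    (X : ℕ → Ω → Bool) (hmeas : ∀ i, Measurable (X i))
    (hindep : iIndepFun X P)
    (hfair : ∀ i b, P {ω | X i ω = b} = 1 / 2) :
    ∀ᵐ ω ∂P, 1 ≤ Filter.liminf
      (fun N : ℕ => (longestSwitch X N ω : ℝ) / Real.logb 2 N) atTop := by
  have hg :
      (fun j : ℕ => ((2 * (Nat.log 2 j + 1) : ℕ) : ℝ)) =o[atTop] (fun j : ℕ => (j : ℝ)) := by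
    push_cast
    exact ((isLittleO_natLog 2).add
      ((isLittleO_const_id_atTop 1).comp_tendsto tendsto_natCast_atTop_atTop)).const_mul_left 2
  filter_upwards [ae_eventually_sub_le_longestSwitch_two_pow hmeas hindep hfair,
    ae_eventually_longestSwitch_two_pow_le hmeas hindep hfair] with ω hlow hup
  exact one_le_liminf_div_logb_two longestSwitch_mono hg hlow (C := 2)
    (hup.frequently.mono fun j hj => by exact_mod_cast hj)
end

section
/- Let K ≥ 2 and N ≥ 2K be integers. Then P(M_N < K−1) ≤ (1 − (K+1)/2^K)^{[½[N/K]]}, where [x] denotes the integer part of x. In words: the probability that the first N fair coin tosses contain no alternating block of K consecutive tosses is at most (1 − (K+1)/2^K)^{[½[N/K]]}. -/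
/-!
Cut the first `2K⌊⌊N/K⌋/2⌋` tosses into `⌊⌊N/K⌋/2⌋` blocks of length `2K`, and in each block
consider the event that an alternating run of `K` tosses starts in the first half of the block.
Sorting by the first such start `r < K` (counted within the block) and by the toss `c` there,
this event is the disjoint union of the events "toss `r` repeats toss `r - 1` (if `r > 0`) and
tosses `r, …, r + K - 1` read `c, !c, c, …`", of probabilities `2⁻ᴷ` for `r = 0` and `2⁻ᴷ⁻¹`
for `r > 0`, for each of the two values of `c`; hence it has probability `(K + 1) / 2ᴷ`. The
events of different blocks depend on disjoint sets of tosses, so they are independent, and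
`M_N < K - 1` forces all of them to fail.
-/

open MeasureTheory ProbabilityTheory Filter

open Finset

lemma Nat.pairwise_disjoint_Ico_mul (L : ℕ) :
    Pairwise (Function.onFun Disjoint fun b => Set.Ico (L * b) (L * b + L)) := by
  intro b b' hne
  wlog hlt : b < b' generalizing b b'
  · exact (this hne.symm (hne.lt_or_gt.resolve_left hlt)).symm
  have hle : L * (b + 1) ≤ L * b' := Nat.mul_le_mul_left L hlt
  rw [mul_add, mul_one] at hle
  exact Set.disjoint_left.2 fun i hi hi' => by
    simp only [Set.mem_Ico] at hi hi'
    omega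

lemma ProbabilityTheory.iIndep.measure_biInter_range_eq_prod {Ω ι : Type*} {mΩ : MeasurableSpace Ω}
    {μ : Measure Ω} {m : ι → MeasurableSpace Ω} (h_le : ∀ i, m i ≤ mΩ) (h_indep : iIndep m μ)
    {S : ℕ → Set ι} (hS : Pairwise (Function.onFun Disjoint S)) {A : ℕ → Set Ω}
    (hA : ∀ b, MeasurableSet[⨆ i ∈ S b, m i] (A b)) (n : ℕ) :
    μ (⋂ b ∈ range n, A b) = ∏ b ∈ range n, μ (A b) := by
  induction n with
  | zero => simp [h_indep.isProbabilityMeasure]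
  | succ n ih =>
    have hdisj : Disjoint (S n) (⋃ b ∈ range n, S b) := by
      simp only [Set.disjoint_iUnion_right, mem_range]
      exact fun b hb => hS hb.ne'
    have hpast : MeasurableSet[⨆ i ∈ ⋃ b ∈ range n, S b, m i] (⋂ b ∈ range n, A b) :=
      Finset.measurableSet_biInter _ fun b hb =>
        (biSup_mono fun i hi => Set.mem_biUnion hb hi : ⨆ i ∈ S b, m i ≤ _) _ (hA b)
    rw [range_add_one, set_biInter_insert, prod_insert notMem_range_self, ← ih]
    exact (Indep_iff _ _ _).1 (indep_iSup_of_disjoint h_le h_indep hdisj) _ _ (hA n) hpast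

namespace LongestSwitch

def altSeq (c : Bool) (j : ℕ) : Bool := if Even j then c else !c

lemma altSeq_zero (c : Bool) : altSeq c 0 = c := by simp [altSeq]

lemma altSeq_succ (c : Bool) (j : ℕ) : altSeq c (j + 1) = !altSeq c j := by
  by_cases h : Even j <;> simp [altSeq, h, Nat.even_add_one]

def runWindow (K a r : ℕ) : Finset ℕ := Icc (a + (r - 1)) (a + r + K - 1)

lemma mem_runWindow {K a r i : ℕ} :
    i ∈ runWindow K a r ↔ a + (r - 1) ≤ i ∧ i ≤ a + r + K - 1 :=
  mem_Icc

lemma card_runWindow {K : ℕ} (hK : 1 ≤ K) (a r : ℕ) :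
    #(runWindow K a r) = if r = 0 then K else K + 1 := by
  rw [runWindow, Nat.card_Icc]
  split_ifs <;> omega

lemma runWindow_subset {K r : ℕ} (hr : r < K) (a : ℕ) :
    (runWindow K a r : Set ℕ) ⊆ Set.Ico a (a + 2 * K) := by
  intro i hi
  rw [mem_coe, mem_runWindow] at hi
  exact Set.mem_Ico.2 (by omega)

section Runs

variable {Ω : Type*} (X : ℕ → Ω → Bool)

/-- The tosses `a + r, …, a + r + K - 1` alternate starting from `c` and, if `r > 0`, toss
`a + r - 1` repeats toss `a + r`. For `r = 0` the truncated subtractions make the window start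
at `a` and impose nothing more. -/
def runAtom (K a r : ℕ) (c : Bool) : Set Ω :=
  ⋂ i ∈ runWindow K a r, X i ⁻¹' {altSeq c (i - (a + r))}

def altRunEvent (K a : ℕ) : Set Ω :=
  ⋃ p ∈ range K ×ˢ (univ : Finset Bool), runAtom X K a p.1 p.2

variable {X} {K a r : ℕ} {c : Bool} {ω : Ω}

lemma apply_eq_of_mem_runAtom (hω : ω ∈ runAtom X K a r c) {i : ℕ}
    (hi : i ∈ runWindow K a r) : X i ω = altSeq c (i - (a + r)) :=
  Set.mem_iInter₂.1 hω i hi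

lemma altBlock_of_mem_runAtom (hω : ω ∈ runAtom X K a r c) :
    AltBlock X ω (a + r) (K - 1) := by
  intro i hi₁ hi₂
  rw [apply_eq_of_mem_runAtom hω (i := i) (mem_runWindow.2 (by omega)),
    apply_eq_of_mem_runAtom hω (i := i + 1) (mem_runWindow.2 (by omega)),
    show i + 1 - (a + r) = i - (a + r) + 1 by omega, altSeq_succ]
  exact Bool.self_ne_not _

lemma apply_start_of_mem_runAtom (hK : 1 ≤ K) (hω : ω ∈ runAtom X K a r c) :
    X (a + r) ω = c := by
  rw [apply_eq_of_mem_runAtom hω (mem_runWindow.2 (by omega)), Nat.sub_self,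
    altSeq_zero]

lemma apply_pred_eq_of_mem_runAtom (hK : 1 ≤ K) (hω : ω ∈ runAtom X K a r c) :
    X (a + (r - 1)) ω = X (a + r) ω := by
  rw [apply_eq_of_mem_runAtom hω (mem_runWindow.2 (by omega)),
    apply_eq_of_mem_runAtom hω (mem_runWindow.2 (by omega)),
    show a + (r - 1) - (a + r) = 0 by omega, Nat.sub_self]

lemma disjoint_runAtom_of_lt {r' : ℕ} {c' : Bool} (hK : 1 ≤ K) (hr : r < r') (hr' : r' < K) :
    Disjoint (runAtom X K a r c) (runAtom X K a r' c') := by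
  refine Set.disjoint_left.2 fun ω hω hω' => ?_
  have hsw := altBlock_of_mem_runAtom hω (a + (r' - 1)) (by omega) (by omega)
  rw [show a + (r' - 1) + 1 = a + r' by omega] at hsw
  exact hsw (apply_pred_eq_of_mem_runAtom hK hω')

lemma pairwiseDisjoint_runAtom (hK : 1 ≤ K) (a : ℕ) :
    (↑(range K ×ˢ (univ : Finset Bool)) : Set (ℕ × Bool)).PairwiseDisjoint
      fun p => runAtom X K a p.1 p.2 := by
  rintro ⟨r, c⟩ hp ⟨r', c'⟩ hp' hne
  simp only [coe_product, coe_range, coe_univ, Set.mem_prod, Set.mem_Iio] at hp hp'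
  rcases lt_trichotomy r r' with h | rfl | h
  · exact disjoint_runAtom_of_lt hK h hp'.1
  · have hc : c ≠ c' := by simpa using hne
    refine Set.disjoint_left.2 fun ω hω hω' => hc ?_
    dsimp only at hω hω'
    rw [← apply_start_of_mem_runAtom hK hω, apply_start_of_mem_runAtom hK hω']
  · exact (disjoint_runAtom_of_lt hK h hp.1).symm

lemma le_longestSwitch_of_altBlock {N m k : ℕ} (hN : m + k + 1 ≤ N) (h : AltBlock X ω m k) :
    k ≤ longestSwitch X N ω :=
  le_csSup ⟨N, fun _ ⟨_, _, hm, _⟩ => by omega⟩ ⟨m, Nat.zero_le _, by omega, h⟩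

lemma le_longestSwitch_of_mem_altRunEvent {N : ℕ} (ha : a + 2 * K ≤ N)
    (hω : ω ∈ altRunEvent X K a) : K - 1 ≤ longestSwitch X N ω := by
  obtain ⟨⟨r, c⟩, hp, hω⟩ := Set.mem_iUnion₂.1 hω
  simp only [mem_product, mem_range, mem_univ, and_true] at hp
  exact le_longestSwitch_of_altBlock (by omega) (altBlock_of_mem_runAtom hω)

lemma subset_biInter_compl_altRunEvent {K N n : ℕ} (hn : 2 * K * n ≤ N) :
    {ω | longestSwitch X N ω < K - 1} ⊆ ⋂ b ∈ range n, (altRunEvent X K (2 * K * b))ᶜ := by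
  intro ω hω
  simp only [Set.mem_iInter₂, Set.mem_compl_iff, mem_range]
  intro b hb hmem
  have hblock : 2 * K * b + 2 * K ≤ N := by nlinarith
  exact absurd (le_longestSwitch_of_mem_altRunEvent hblock hmem) (not_le.2 hω)

lemma measurableSet_altRunEvent_iSup (K a : ℕ) :
    MeasurableSet[⨆ i ∈ Set.Ico a (a + 2 * K), MeasurableSpace.comap (X i) inferInstance]
      (altRunEvent X K a) := by
  refine Finset.measurableSet_biUnion _ fun p hp => Finset.measurableSet_biInter _ fun i hi => ?_
  simp only [mem_product, mem_range] at hp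
  exact le_iSup₂ (f := fun j (_ : j ∈ Set.Ico a (a + 2 * K)) =>
      MeasurableSpace.comap (X j) inferInstance) i (runWindow_subset hp.1 a hi) _
    ⟨_, measurableSet_singleton _, rfl⟩

end Runs

section Probability

variable {Ω : Type*} [MeasurableSpace Ω] {P : Measure Ω} {X : ℕ → Ω → Bool}

lemma measure_biInter_preimage_singleton (hindep : iIndepFun X P)
    (hfair : ∀ i b, P {ω | X i ω = b} = 1 / 2) (S : Finset ℕ) (v : ℕ → Bool) :
    P (⋂ i ∈ S, X i ⁻¹' {v i}) = 2⁻¹ ^ #S := by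
  rw [hindep.meas_biInter fun i _ => ⟨{v i}, measurableSet_singleton _, rfl⟩]
  exact prod_eq_pow_card fun i _ => (hfair i (v i)).trans (one_div 2)

lemma measurableSet_runAtom (hmeas : ∀ i, Measurable (X i)) (K a r : ℕ) (c : Bool) :
    MeasurableSet (runAtom X K a r c) :=
  Finset.measurableSet_biInter _ fun i _ => hmeas i (measurableSet_singleton _)

lemma measurableSet_altRunEvent (hmeas : ∀ i, Measurable (X i)) (K a : ℕ) :
    MeasurableSet (altRunEvent X K a) :=
  Finset.measurableSet_biUnion _ fun p _ => measurableSet_runAtom hmeas K a p.1 p.2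

lemma measureReal_runAtom (hindep : iIndepFun X P) (hfair : ∀ i b, P {ω | X i ω = b} = 1 / 2)
    (K a r : ℕ) (c : Bool) : P.real (runAtom X K a r c) = 2⁻¹ ^ #(runWindow K a r) := by
  simp [measureReal_def, runAtom, measure_biInter_preimage_singleton hindep hfair]

lemma measureReal_altRunEvent (hmeas : ∀ i, Measurable (X i)) (hindep : iIndepFun X P)
    (hfair : ∀ i b, P {ω | X i ω = b} = 1 / 2) {K : ℕ} (hK : 1 ≤ K) (a : ℕ) :
    P.real (altRunEvent X K a) = (K + 1) / 2 ^ K := by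
  have := hindep.isProbabilityMeasure
  rw [altRunEvent, measureReal_biUnion_finset (pairwiseDisjoint_runAtom hK a)
    fun p _ => measurableSet_runAtom hmeas K a p.1 p.2, sum_product]
  simp_rw [measureReal_runAtom hindep hfair, card_runWindow hK, Fintype.sum_bool]
  obtain ⟨n, rfl⟩ : ∃ n, K = n + 1 := ⟨K - 1, by omega⟩
  simp only [sum_range_succ', Nat.succ_ne_zero, if_false, if_true, sum_const, card_range,
    nsmul_eq_mul, inv_pow]
  push_cast
  field_simp
  ring

lemma measure_biInter_compl_altRunEvent (hmeas : ∀ i, Measurable (X i))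
    (hindep : iIndepFun X P) (K n : ℕ) :
    P (⋂ b ∈ range n, (altRunEvent X K (2 * K * b))ᶜ)
      = ∏ b ∈ range n, P (altRunEvent X K (2 * K * b))ᶜ :=
  hindep.iIndep.measure_biInter_range_eq_prod (fun i => (hmeas i).comap_le)
    (Nat.pairwise_disjoint_Ico_mul (2 * K)) (fun _ => (measurableSet_altRunEvent_iSup K _).compl) n

end Probability

end LongestSwitch

open LongestSwitch

theorem prob_longestSwitch_lt_upper_bound_general {Ω : Type*} [MeasurableSpace Ω] (P : Measure Ω) [IsProbabilityMeasure P]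
    (X : ℕ → Ω → Bool) (hmeas : ∀ i, Measurable (X i))
    (hindep : iIndepFun X P)
    (hfair : ∀ i b, P {ω | X i ω = b} = 1 / 2)
    (K N : ℕ) (hK : 2 ≤ K) :
    (P {ω | longestSwitch X N ω < K - 1}).toReal ≤
      (1 - (K + 1 : ℝ) / 2 ^ K) ^ (N / K / 2) := by
  have hblocks : 2 * K * (N / K / 2) ≤ N :=
    calc 2 * K * (N / K / 2) = K * (2 * (N / K / 2)) := by ring
      _ ≤ K * (N / K) := Nat.mul_le_mul_left K (Nat.mul_div_le _ _)
      _ ≤ N := Nat.mul_div_le N K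
  calc (P {ω | longestSwitch X N ω < K - 1}).toReal
      ≤ P.real (⋂ b ∈ range (N / K / 2), (altRunEvent X K (2 * K * b))ᶜ) :=
        measureReal_mono (subset_biInter_compl_altRunEvent hblocks)
    _ = ∏ b ∈ range (N / K / 2), P.real (altRunEvent X K (2 * K * b))ᶜ := by
        rw [measureReal_def, measure_biInter_compl_altRunEvent hmeas hindep, ENNReal.toReal_prod]
        rfl
    _ = (1 - (K + 1 : ℝ) / 2 ^ K) ^ (N / K / 2) := by
        simp_rw [probReal_compl_eq_one_sub (measurableSet_altRunEvent hmeas _ _),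
          measureReal_altRunEvent hmeas hindep hfair (by omega : 1 ≤ K), prod_const, card_range]

/-- For `K ≥ 2` and `N ≥ 2K`,
`P(M_N < K − 1) ≤ (1 − (K+1)/2^K)^([½[N/K]])`. -/
theorem prob_longestSwitch_lt_upper_bound {Ω : Type*} [MeasurableSpace Ω] (P : Measure Ω) [IsProbabilityMeasure P]
    (X : ℕ → Ω → Bool) (hmeas : ∀ i, Measurable (X i))
    (hindep : iIndepFun X P)
    (hfair : ∀ i b, P {ω | X i ω = b} = 1 / 2)
    (K N : ℕ) (hK : 2 ≤ K) (hN : 2 * K ≤ N) :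
    (P {ω | longestSwitch X N ω < K - 1}).toReal ≤
      (1 - (K + 1 : ℝ) / 2 ^ K) ^ (N / K / 2) :=
  prob_longestSwitch_lt_upper_bound_general P X hmeas hindep hfair K N hK
end

section
/- Let K ≥ 2 and N ≥ 2K be integers, set L = [(N−2K)/K], and for l = 0, 1, …, L let C_l be the event that some block of K consecutive tosses within X_{lK+1}, …, X_{(l+2)K} is alternating. Let D₀ be the union of the C_l over even l ∈ {0,…,L} and D₁ the union of the C_l over odd l ∈ {0,…,L}. Then P(D₀ ∩ D₁) ≥ P(D₀) P(D₁); equivalently, P(D̄₀ ∩ D̄₁) ≥ P(D̄₀) P(D̄₁). -/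
open MeasureTheory ProbabilityTheory Filter

/-! The events depend on the tosses only through the switch indicators `X i ≠ X (i + 1)`, and
both are increasing in them. A word of `n + 1` fair tosses is determined by its first toss and
its `n` switches, so the switch word is uniformly distributed on `Fin n → Bool`; on this
product space increasing events are positively correlated (Harris), which follows from the
Daykin inequality `|A| |B| ≤ |A ⊼ B| |A ⊻ B|`. -/

open Finset
open scoped FinsetFamily

theorem IsUpperSet.card_mul_card_le_card_mul_card_inter {α : Type*} [DistribLattice α] [Fintype α]
    [DecidableEq α] {A B : Finset α} (hA : IsUpperSet (A : Set α)) (hB : IsUpperSet (B : Set α)) :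
    #A * #B ≤ Fintype.card α * #(A ∩ B) :=
  calc #A * #B ≤ #(A ⊼ B) * #(A ⊻ B) := le_card_infs_mul_card_sups A B
    _ ≤ Fintype.card α * #(A ∩ B) := by
      refine Nat.mul_le_mul (card_le_univ _) (card_le_card fun c hc => ?_)
      obtain ⟨a, ha, b, hb, rfl⟩ := mem_sups.1 hc
      exact mem_inter.2 ⟨hA le_sup_left ha, hB le_sup_right hb⟩

def switches {n : ℕ} (v : Fin (n + 1) → Bool) : Fin n → Bool :=
  fun i => v i.castSucc != v i.succ

theorem bijective_head_switches (n : ℕ) :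
    Function.Bijective fun v : Fin (n + 1) → Bool => (v 0, switches v) := by
  refine (Fintype.bijective_iff_injective_and_card _).2 ⟨fun v w h => ?_, ?_⟩
  · obtain ⟨h0, hs⟩ := Prod.mk.inj h
    funext i
    induction i using Fin.induction with
    | zero => exact h0
    | succ i ih =>
      have := congrFun hs i
      simp only [switches, ih] at this
      revert this; cases v i.succ <;> cases w i.succ <;> simp
  · simp [pow_succ, mul_comm]

theorem card_filter_switches_mem {n : ℕ} (A : Finset (Fin n → Bool)) :
    #{v : Fin (n + 1) → Bool | switches v ∈ A} = 2 * #A := by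
  rw [card_equiv (.ofBijective _ (bijective_head_switches n)) (t := univ ×ˢ A) (by simp),
    card_product, card_univ, Fintype.card_bool]

section CoinTosses

variable {Ω : Type*} [MeasurableSpace Ω] {P : Measure Ω} {X : ℕ → Ω → Bool}

theorem measure_forall_fin_eq_half_pow (hindep : iIndepFun X P)
    (hfair : ∀ i b, P {ω | X i ω = b} = 1 / 2) {n : ℕ} (v : Fin n → Bool) :
    P {ω | ∀ i : Fin n, X i ω = v i} = (1 / 2) ^ n := by
  have hset : {ω | ∀ i : Fin n, X i ω = v i} = ⋂ i : Fin n, {ω | X i ω = v i} := by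
    ext ω; simp
  rw [hset, (hindep.precomp Fin.val_injective).meas_iInter
    (s := fun i : Fin n => {ω | X i ω = v i}) fun i => ⟨{v i}, trivial, rfl⟩]
  simp [hfair]

theorem measure_fin_mem_eq_card_mul (hmeas : ∀ i, Measurable (X i)) (hindep : iIndepFun X P)
    (hfair : ∀ i b, P {ω | X i ω = b} = 1 / 2) {n : ℕ} (S : Finset (Fin n → Bool)) :
    P {ω | (fun i : Fin n => X i ω) ∈ S} = #S * (1 / 2) ^ n := by
  have hset : {ω | (fun i : Fin n => X i ω) ∈ S} = ⋃ v ∈ S, {ω | ∀ i : Fin n, X i ω = v i} := by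
    ext ω; simp [← funext_iff]
  rw [hset, measure_biUnion_finset,
    sum_congr rfl fun v _ => measure_forall_fin_eq_half_pow hindep hfair v, sum_const, nsmul_eq_mul]
  · intro v _ w _ hvw
    exact Set.disjoint_left.2 fun ω hv hw => hvw (funext fun i => (hv i).symm.trans (hw i))
  · intro v _
    simp only [Set.ofPred_forall]
    exact .iInter fun i => hmeas i (measurableSet_singleton _)

theorem measure_switches_mem_eq_card_mul (hmeas : ∀ i, Measurable (X i)) (hindep : iIndepFun X P)
    (hfair : ∀ i b, P {ω | X i ω = b} = 1 / 2) {n : ℕ} (A : Finset (Fin n → Bool)) :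
    P {ω | switches (fun i : Fin (n + 1) => X i ω) ∈ A} = #A * (1 / 2) ^ n := by
  have hwords :=
    measure_fin_mem_eq_card_mul hmeas hindep hfair {v : Fin (n + 1) → Bool | switches v ∈ A}
  simp only [mem_filter_univ] at hwords
  rw [hwords, card_filter_switches_mem]
  calc ((2 * #A : ℕ) : ENNReal) * (1 / 2) ^ (n + 1) = #A * (1 / 2) ^ n * (2 * (1 / 2)) := by
        push_cast; ring
    _ = #A * (1 / 2) ^ n := by rw [ENNReal.mul_div_cancel two_ne_zero ENNReal.ofNat_ne_top, mul_one]

theorem measure_switches_mem_mul_le (hmeas : ∀ i, Measurable (X i)) (hindep : iIndepFun X P)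
    (hfair : ∀ i b, P {ω | X i ω = b} = 1 / 2) {n : ℕ} {A B : Set (Fin n → Bool)}
    (hA : IsUpperSet A) (hB : IsUpperSet B) :
    P {ω | switches (fun i : Fin (n + 1) => X i ω) ∈ A} *
        P {ω | switches (fun i : Fin (n + 1) => X i ω) ∈ B} ≤
      P ({ω | switches (fun i : Fin (n + 1) => X i ω) ∈ A} ∩
        {ω | switches (fun i : Fin (n + 1) => X i ω) ∈ B}) := by
  classical
  have hcard := IsUpperSet.card_mul_card_le_card_mul_card_inter (A := A.toFinset)
    (B := B.toFinset) (by simpa) (by simpa)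
  have hinter : {ω | switches (fun i : Fin (n + 1) => X i ω) ∈ A} ∩
      {ω | switches (fun i : Fin (n + 1) => X i ω) ∈ B} =
      {ω | switches (fun i : Fin (n + 1) => X i ω) ∈ A.toFinset ∩ B.toFinset} := by
    ext; simp
  rw [hinter]
  simp only [← Set.mem_toFinset (s := A), ← Set.mem_toFinset (s := B)]
  simp only [measure_switches_mem_eq_card_mul hmeas hindep hfair]
  simp only [Fintype.card_fun, Fintype.card_bool, Fintype.card_fin] at hcard
  calc (#A.toFinset : ENNReal) * (1 / 2) ^ n * (#B.toFinset * (1 / 2) ^ n)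
      = ((#A.toFinset * #B.toFinset : ℕ) : ENNReal) * (1 / 2) ^ n * (1 / 2) ^ n := by
        push_cast; ring
    _ ≤ ((2 ^ n * #(A.toFinset ∩ B.toFinset) : ℕ) : ENNReal) * (1 / 2) ^ n * (1 / 2) ^ n := by
        gcongr
    _ = #(A.toFinset ∩ B.toFinset) * (1 / 2) ^ n * (2 * (1 / 2)) ^ n := by
        push_cast; ring
    _ = #(A.toFinset ∩ B.toFinset) * (1 / 2) ^ n := by
        rw [ENNReal.mul_div_cancel two_ne_zero ENNReal.ofNat_ne_top, one_pow, mul_one]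

end CoinTosses

theorem le_longestSwitchIn_iff {Ω : Type*} {X : ℕ → Ω → Bool} {s N t : ℕ} {ω : Ω} (hN : 0 < N) :
    t ≤ longestSwitchIn X s N ω ↔ ∃ m, s ≤ m ∧ m + t + 1 ≤ s + N ∧ AltBlock X ω m t := by
  have hbdd : BddAbove {k | ∃ m, s ≤ m ∧ m + k + 1 ≤ s + N ∧ AltBlock X ω m k} :=
    ⟨N, fun k ⟨m, hm, hle, _⟩ => by omega⟩
  have hne : {k | ∃ m, s ≤ m ∧ m + k + 1 ≤ s + N ∧ AltBlock X ω m k}.Nonempty :=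
    ⟨0, s, le_rfl, by omega, fun i h1 h2 => by omega⟩
  refine ⟨fun ht => ?_, fun h => le_csSup hbdd h⟩
  obtain ⟨m, hm, hle, halt⟩ := Nat.sSup_mem hne hbdd
  rw [longestSwitchIn] at ht
  exact ⟨m, hm, by omega, fun i h1 h2 => halt i h1 (by omega)⟩

/-- The event `⋃_{l ≤ L, p l} C_l`, read off the switch word. -/
def switchRunSet (K L : ℕ) (p : ℕ → Prop) (n : ℕ) : Set (Fin n → Bool) :=
  {y | ∃ l, l ≤ L ∧ p l ∧ ∃ m, l * K ≤ m ∧ m + (K - 1) + 1 ≤ l * K + 2 * K ∧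
    ∀ i : Fin n, m ≤ i → i < m + (K - 1) → y i = true}

theorem isUpperSet_switchRunSet (K L : ℕ) (p : ℕ → Prop) (n : ℕ) :
    IsUpperSet (switchRunSet K L p n) :=
  fun _ _ hyz ⟨l, hl, hp, m, hm, hmK, hrun⟩ =>
    ⟨l, hl, hp, m, hm, hmK, fun i h1 h2 => le_antisymm (Bool.le_true _) (hrun i h1 h2 ▸ hyz i)⟩

theorem setOf_exists_le_longestSwitchIn_eq {Ω : Type*} (X : ℕ → Ω → Bool) {K : ℕ} (hK : 0 < K)
    (L : ℕ) (p : ℕ → Prop) :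
    {ω | ∃ l, l ≤ L ∧ p l ∧ K - 1 ≤ longestSwitchIn X (l * K) (2 * K) ω} =
      {ω | switches (fun i : Fin ((L + 2) * K + 1) => X i ω) ∈
        switchRunSet K L p ((L + 2) * K)} := by
  ext ω
  refine exists_congr fun l => and_congr_right fun hl => and_congr_right fun _ => ?_
  rw [le_longestSwitchIn_iff (by omega)]
  refine exists_congr fun m => and_congr_right fun _ => and_congr_right fun hmK => ?_
  have hlL : l * K ≤ L * K := Nat.mul_le_mul_right K hl
  simp only [AltBlock, switches, bne_iff_ne]
  exact ⟨fun h i h1 h2 => h i h1 h2, fun h i h1 h2 => h ⟨i, by nlinarith⟩ h1 h2⟩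

theorem prob_inter_unions_ge_mul_general {Ω : Type*} [MeasurableSpace Ω] (P : Measure Ω)
    (X : ℕ → Ω → Bool) (hmeas : ∀ i, Measurable (X i))
    (hindep : iIndepFun X P)
    (hfair : ∀ i b, P {ω | X i ω = b} = 1 / 2)
    (K N : ℕ) (hK : 2 ≤ K) :
    P {ω | ∃ l, l ≤ (N - 2 * K) / K ∧ Even l ∧ K - 1 ≤ longestSwitchIn X (l * K) (2 * K) ω}
        * P {ω | ∃ l, l ≤ (N - 2 * K) / K ∧ Odd l ∧
            K - 1 ≤ longestSwitchIn X (l * K) (2 * K) ω} ≤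
      P ({ω | ∃ l, l ≤ (N - 2 * K) / K ∧ Even l ∧
            K - 1 ≤ longestSwitchIn X (l * K) (2 * K) ω} ∩
          {ω | ∃ l, l ≤ (N - 2 * K) / K ∧ Odd l ∧
            K - 1 ≤ longestSwitchIn X (l * K) (2 * K) ω}) := by
  simp only [setOf_exists_le_longestSwitchIn_eq X (by omega : 0 < K)]
  exact measure_switches_mem_mul_le hmeas hindep hfair
    (isUpperSet_switchRunSet _ _ _ _) (isUpperSet_switchRunSet _ _ _ _)

/-- Positive association of the events `C_l`. For `K ≥ 2`, `N ≥ 2K` and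
`L = [(N − 2K)/K]`, let `C_l` be the event that some block of `K` consecutive tosses
within `X_{lK+1}, …, X_{(l+2)K}` (1-based; 0-based window start `lK`, length `2K`) is
alternating. With `D₀` the union of the `C_l` over even `l ≤ L` and `D₁` the union over
odd `l ≤ L`, we have `P(D₀ ∩ D₁) ≥ P(D₀) P(D₁)`. -/
theorem prob_inter_unions_ge_mul {Ω : Type*} [MeasurableSpace Ω] (P : Measure Ω) [IsProbabilityMeasure P]
    (X : ℕ → Ω → Bool) (hmeas : ∀ i, Measurable (X i))
    (hindep : iIndepFun X P)
    (hfair : ∀ i b, P {ω | X i ω = b} = 1 / 2)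
    (K N : ℕ) (hK : 2 ≤ K) (hN : 2 * K ≤ N) :
    P {ω | ∃ l, l ≤ (N - 2 * K) / K ∧ Even l ∧ K - 1 ≤ longestSwitchIn X (l * K) (2 * K) ω}
        * P {ω | ∃ l, l ≤ (N - 2 * K) / K ∧ Odd l ∧
            K - 1 ≤ longestSwitchIn X (l * K) (2 * K) ω} ≤
      P ({ω | ∃ l, l ≤ (N - 2 * K) / K ∧ Even l ∧
            K - 1 ≤ longestSwitchIn X (l * K) (2 * K) ω} ∩
          {ω | ∃ l, l ≤ (N - 2 * K) / K ∧ Odd l ∧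
            K - 1 ≤ longestSwitchIn X (l * K) (2 * K) ω}) :=
  prob_inter_unions_ge_mul_general P X hmeas hindep hfair K N hK
end
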